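/- arXiv:2301.00035 — 2 statements merged into one kernel-verified Lean document; each statement's English description precedes it below -/
import Mathlib

section
/- In the centralizer g_0^f = {y ∈ g_0 : [f, y] = 0}, the elements W̄^{(1)}_{p,q} := Σ_{(i,j): row(i)=p, row(j)=q, col(i)=col(j)} e_{i,j}, for q_l < p = q ≤ q_1 or 1 ≤ p,q ≤ q_l, indeed satisfy [f, W̄^{(1)}_{p,q}] = 0. -/
/-!
Both `f W̄` and `W̄ f` are `0/1` matrices whose `(a, b)` entry is `1` exactly when
`col a = col b + 1`, `row a = p` and `row b = qq`, provided the intermediate box exists: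
for `f W̄` it is `(col b, row a)`, which exists since the columns decrease in height; for `W̄ f`
it is `(col a, qq)`, and row `qq` of column `col a` exists by the hypothesis on `(p, qq)`
(either `qq = p = row a`, or `qq ≤ q_l`).
-/

open Matrix

/-- Index set for `gl(N)` in the pyramid setup: pairs (column, row);
`col ⟨r,p⟩ = r` (0-based), `row ⟨r,p⟩ = p + 1` (1-based). -/
abbrev PyrIdx (l : ℕ) (q : Fin l → ℕ) := Σ r : Fin l, Fin (q r)

/-- The nilpotent element `f = Σ_j e_{ĵ,j}` (sum over `j` for which `ĵ` exists). -/
noncomputable def pyrF (l : ℕ) (q : Fin l → ℕ) :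
    Matrix (PyrIdx l q) (PyrIdx l q) ℂ :=
  ∑ i : PyrIdx l q, ∑ j : PyrIdx l q,
    if ((i.1 : ℕ) = (j.1 : ℕ) + 1 ∧ (i.2 : ℕ) = (j.2 : ℕ)) then
      Matrix.single i j 1 else 0

/-- `W̄^{(1)}_{p,qq} = Σ_{(i,j): row(i)=p, row(j)=qq, col(i)=col(j)} e_{i,j}`. -/
noncomputable def Wbar (l : ℕ) (q : Fin l → ℕ) (p qq : ℕ) :
    Matrix (PyrIdx l q) (PyrIdx l q) ℂ :=
  ∑ i : PyrIdx l q, ∑ j : PyrIdx l q,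
    if (i.1 = j.1 ∧ (i.2 : ℕ) + 1 = p ∧ (j.2 : ℕ) + 1 = qq) then
      Matrix.single i j 1 else 0

theorem Matrix.sum_ite_single_one_apply {ι α : Type*} [Fintype ι] [DecidableEq ι]
    [AddCommMonoid α] [One α] (P : ι → ι → Prop) [∀ i j, Decidable (P i j)] (a b : ι) :
    (∑ i, ∑ j, if P i j then single i j (1 : α) else 0) a b = if P a b then 1 else 0 := by
  have hsum : (∑ i, ∑ j, if P i j then single i j (1 : α) else 0) =
      of fun i j => if P i j then 1 else 0 := by
    conv_rhs => rw [matrix_eq_sum_single (of _)]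
    simp_rw [of_apply, apply_ite (single _ _), single_zero]
  rw [hsum, of_apply]

theorem Fintype.sum_boole_mul_boole_of_unique {ι α : Type*} [Fintype ι] [Semiring α]
    {R S : ι → Prop} [DecidablePred R] [DecidablePred S] {P : Prop} [Decidable P]
    (hP : (∃ c, R c ∧ S c) ↔ P) (huniq : ∀ c c', R c → S c → R c' → S c' → c = c') :
    ∑ c, ((if R c then 1 else 0 : α) * if S c then 1 else 0) = if P then 1 else 0 := by
  simp_rw [ite_zero_mul_ite_zero, mul_one]
  split_ifs with h
  · obtain ⟨c, hRc, hSc⟩ := hP.2 h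
    rw [Finset.sum_eq_single c (fun c' _ hc' => if_neg fun h' => hc' (huniq _ _ h'.1 h'.2 hRc hSc))
      (by simp), if_pos ⟨hRc, hSc⟩]
  · exact Finset.sum_eq_zero fun c _ => if_neg fun hc => h (hP.1 ⟨c, hc⟩)

namespace PyrIdx

variable {l : ℕ} {q : Fin l → ℕ}

theorem ext' {a b : PyrIdx l q} (hcol : a.1 = b.1) (hrow : (a.2 : ℕ) = b.2) : a = b := by
  obtain ⟨r, x⟩ := a
  obtain ⟨s, y⟩ := b
  subst hcol
  simp only [Sigma.mk.injEq, heq_eq_eq, true_and]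
  exact Fin.ext hrow

end PyrIdx

section Entries

variable {l : ℕ} {q : Fin l → ℕ} {p qq : ℕ}

theorem pyrF_apply (a b : PyrIdx l q) :
    pyrF l q a b = if (a.1 : ℕ) = b.1 + 1 ∧ (a.2 : ℕ) = b.2 then 1 else 0 :=
  sum_ite_single_one_apply _ a b

theorem Wbar_apply (a b : PyrIdx l q) :
    Wbar l q p qq a b = if a.1 = b.1 ∧ (a.2 : ℕ) + 1 = p ∧ (b.2 : ℕ) + 1 = qq then 1 else 0 :=
  sum_ite_single_one_apply _ a b

theorem pyrF_mul_Wbar_apply (hq : Antitone q) (a b : PyrIdx l q) :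
    (pyrF l q * Wbar l q p qq) a b =
      if (a.1 : ℕ) = b.1 + 1 ∧ (a.2 : ℕ) + 1 = p ∧ (b.2 : ℕ) + 1 = qq then 1 else 0 := by
  simp only [mul_apply, pyrF_apply, Wbar_apply]
  refine Fintype.sum_boole_mul_boole_of_unique ⟨?_, ?_⟩ ?_
  · rintro ⟨c, ⟨hac, hac'⟩, hcb, hp, hqq⟩
    exact ⟨hcb ▸ hac, hac' ▸ hp, hqq⟩
  · rintro ⟨hab, hp, hqq⟩
    have hrow : (a.2 : ℕ) < q b.1 := a.2.isLt.trans_le (hq (Fin.le_def.2 (by omega)))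
    exact ⟨⟨b.1, ⟨a.2, hrow⟩⟩, ⟨hab, rfl⟩, rfl, hp, hqq⟩
  · rintro c c' ⟨hac, hac'⟩ - ⟨hac₂, hac₂'⟩ -
    exact PyrIdx.ext' (Fin.ext (by omega)) (by omega)

theorem Wbar_mul_pyrF_apply (a b : PyrIdx l q) :
    (Wbar l q p qq * pyrF l q) a b =
      if (a.1 : ℕ) = b.1 + 1 ∧ (a.2 : ℕ) + 1 = p ∧ (b.2 : ℕ) + 1 = qq ∧ qq ≤ q a.1
      then 1 else 0 := by
  simp only [mul_apply, pyrF_apply, Wbar_apply]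
  refine Fintype.sum_boole_mul_boole_of_unique ⟨?_, ?_⟩ ?_
  · rintro ⟨c, ⟨hac, hp, hqq⟩, hcb, hcb'⟩
    exact ⟨hac ▸ hcb, hp, hcb' ▸ hqq, hac ▸ hqq ▸ c.2.isLt⟩
  · rintro ⟨hab, hp, hqq, hcol⟩
    exact ⟨⟨a.1, ⟨b.2, by omega⟩⟩, ⟨rfl, hp, hqq⟩, hab, rfl⟩
  · rintro c c' ⟨hac, -⟩ ⟨-, hcb⟩ ⟨hac₂, -⟩ ⟨-, hcb₂⟩
    exact PyrIdx.ext' (hac.symm.trans hac₂) (by omega)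

end Entries

/-- For `q_l < p = qq ≤ q_1` or `1 ≤ p, qq ≤ q_l`, the element `W̄^{(1)}_{p,qq} ∈ g_0`
centralizes `f`: `[f, W̄^{(1)}_{p,qq}] = 0`. -/
theorem stmt10 (l : ℕ) (hl : 0 < l) (q : Fin l → ℕ) (hq : Antitone q)
    (p qq : ℕ)
    (hpq : (q ⟨l - 1, by omega⟩ < p ∧ p = qq ∧ p ≤ q ⟨0, hl⟩) ∨
      (1 ≤ p ∧ p ≤ q ⟨l - 1, by omega⟩ ∧ 1 ≤ qq ∧ qq ≤ q ⟨l - 1, by omega⟩)) :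
    ⁅pyrF l q, Wbar l q p qq⁆ = 0 := by
  have hcol : ∀ a : PyrIdx l q, (a.2 : ℕ) + 1 = p → qq ≤ q a.1 := by
    rintro a rfl
    rcases hpq with ⟨-, rfl, -⟩ | ⟨-, -, -, hqq⟩
    · exact a.2.isLt
    · exact hqq.trans (hq (Fin.le_def.2 (Nat.le_sub_one_of_lt a.1.isLt)))
  rw [Ring.lie_def, sub_eq_zero]
  ext a b
  rw [pyrF_mul_Wbar_apply hq, Wbar_mul_pyrF_apply]
  exact if_congr ⟨fun ⟨hab, hp, hqq⟩ => ⟨hab, hp, hqq, hcol a hp⟩,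
    fun ⟨hab, hp, hqq, _⟩ => ⟨hab, hp, hqq⟩⟩ rfl rfl
end

section
/- For the Borcherds Lie algebra L(V) = (V ⊗ ℂ[t,t^{-1}])/Im(∂⊗id + id⊗d/dt) of a vertex algebra V, the bracket [u t^a, v t^b] = Σ_{r≥0} C(a,r) (u_{(r)} v) t^{a+b−r} is antisymmetric modulo the image of ∂⊗id + id⊗d/dt; i.e., [u t^a, v t^b] + [v t^b, u t^a] ∈ Im(∂⊗id + id⊗d/dt). -/
/-!
Modulo the image `P` of `∂⊗id + id⊗d/dt` we have `(∂w) t^c ≡ -c · w t^(c-1)`, hence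
`∂^(j)(w) t^c ≡ (-1)^j C(c,j) · w t^(c-j)`. Substituting skew-symmetry for `u_{(r)}v` turns
`[u t^a, v t^b]` into `-Σ_m (Σ_{r+j=m} (-1)^r C(a,r) C(a+b-r,j)) (v_{(m)}u) t^(a+b-m)` modulo `P`,
and the inner sum is `C(b,m)` by upper negation and Chu–Vandermonde, so the two brackets cancel.
-/

/-- The generalized binomial coefficient `C(a, r) = a(a−1)⋯(a−r+1)/r!` for `a : ℤ`. -/
noncomputable def genChoose (a : ℤ) (r : ℕ) : ℂ :=
  (∏ k ∈ Finset.range r, ((a : ℂ) - (k : ℂ))) / (r.factorial : ℂ)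

/-- The operator `∂⊗id + id⊗(d/dt)` on `V ⊗ ℂ[t,t⁻¹]`, realized on `ℤ →₀ V`
(where `Finsupp.single a v` stands for `v ⊗ t^a`). -/
noncomputable def borchD (V : Type*) [AddCommGroup V] [Module ℂ V]
    (T : V →ₗ[ℂ] V) : (ℤ →₀ V) →ₗ[ℂ] (ℤ →₀ V) :=
  Finsupp.lsum ℂ fun a => (Finsupp.lsingle a).comp T + (a : ℂ) • Finsupp.lsingle (a - 1)

open Finset

theorem Ring.choose_eq_neg_one_pow_mul_choose {R : Type*} [CommRing R] [BinomialRing R]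
    (r : R) (n : ℕ) : choose r n = (-1) ^ n * choose (n - 1 - r) n := by
  rw [← neg_neg r, choose_neg, Units.smul_def, Int.coe_negOnePow_natCast, zsmul_eq_mul,
    neg_neg, Int.cast_pow, Int.cast_neg, Int.cast_one, neg_add_eq_sub, sub_right_comm]

theorem Ring.sum_neg_one_pow_mul_choose_mul_choose {R : Type*} [CommRing R] [BinomialRing R]
    (A B : R) (m : ℕ) :
    ∑ r ∈ range (m + 1), (-1) ^ r * choose A r * choose (A + B - r) (m - r) = choose B m := by
  have hneg : ∀ r ∈ range (m + 1), (-1) ^ r * choose A r * choose (A + B - r) (m - r)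
      = (-1) ^ m * (choose A r * choose (m - 1 - A - B) (m - r)) := by
    intro r hr
    have hrm : r ≤ m := Nat.lt_succ_iff.mp (mem_range.mp hr)
    have hsign : (-1 : R) ^ m = (-1) ^ r * (-1) ^ (m - r) := by
      rw [← pow_add, Nat.add_sub_cancel' hrm]
    rw [choose_eq_neg_one_pow_mul_choose (A + B - r), Nat.cast_sub hrm,
      show (m : R) - r - 1 - (A + B - r) = m - 1 - A - B by ring, hsign]
    ring
  rw [sum_congr rfl hneg, ← mul_sum, ← Nat.sum_antidiagonal_eq_sum_range_succ
    (fun i j => choose A i * choose (m - 1 - A - B) j), ← add_choose_eq m (Commute.all _ _),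
    show A + (m - 1 - A - B) = m - 1 - B by ring, choose_eq_neg_one_pow_mul_choose B]

theorem genChoose_eq_choose (a : ℤ) (r : ℕ) : genChoose a r = Ring.choose (a : ℂ) r := by
  rw [genChoose, Ring.choose_eq_smul, ← Polynomial.aeval_eq_smeval,
    ← descPochhammer_eval_eq_prod_range, smul_eq_mul, inv_mul_eq_div]
  simp [Polynomial.aeval_def]

theorem sum_neg_one_pow_mul_genChoose_mul_genChoose (a b : ℤ) (m : ℕ) :
    ∑ r ∈ range (m + 1), (-1) ^ r * genChoose a r * genChoose (a + b - r) (m - r)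
      = genChoose b m := by
  simp only [genChoose_eq_choose, Int.cast_sub, Int.cast_add, Int.cast_natCast]
  exact Ring.sum_neg_one_pow_mul_choose_mul_choose _ _ m

theorem Finset.sum_range_sum_range_eq_sum_range_diag {M : Type*} [AddCommMonoid M]
    (N : ℕ) (f : ℕ → ℕ → M) (hf : ∀ i j, N ≤ i + j → f i j = 0) :
    ∑ i ∈ range N, ∑ j ∈ range N, f i j
      = ∑ m ∈ range N, ∑ i ∈ range (m + 1), f i (m - i) := by
  rw [sum_range_diag_flip]
  refine sum_congr rfl fun i _ => (sum_subset (range_subset_range.2 (N.sub_le i)) ?_).symm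
  intro j hj hj'
  exact hf i j (by rw [mem_range] at hj hj'; omega)

theorem sum_genChoose_smul_sum_genChoose_smul {M : Type*} [AddCommGroup M] [Module ℂ M]
    (a b : ℤ) (N : ℕ) (X : ℕ → M) (hX : ∀ m, N ≤ m → X m = 0) :
    ∑ r ∈ range N, genChoose a r •
        ∑ j ∈ range N, ((-1) ^ r * genChoose (a + b - r) j) • X (r + j)
      = ∑ m ∈ range N, genChoose b m • X m := by
  simp only [smul_sum, smul_smul]
  rw [sum_range_sum_range_eq_sum_range_diag N _ fun i j h => by rw [hX _ h, smul_zero]]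
  refine sum_congr rfl fun m _ => ?_
  rw [← sum_neg_one_pow_mul_genChoose_mul_genChoose a b m, sum_smul]
  refine sum_congr rfl fun r hr => ?_
  rw [Nat.add_sub_cancel' (Nat.lt_succ_iff.mp (mem_range.mp hr))]
  congr 1
  ring

section BorcherdsQuotient

variable {V : Type*} [AddCommGroup V] [Module ℂ V] (T : V →ₗ[ℂ] V)

local notation "π" => Submodule.mkQ (LinearMap.range (borchD V T))

theorem borchD_single (c : ℤ) (w : V) :
    borchD V T (Finsupp.single c w)
      = Finsupp.single c (T w) + (c : ℂ) • Finsupp.single (c - 1) w := by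
  simp [borchD]

theorem mkQ_single_T_apply (c : ℤ) (w : V) :
    π (Finsupp.single c (T w)) = -(c : ℂ) • π (Finsupp.single (c - 1) w) := by
  have h : π (borchD V T (Finsupp.single c w)) = 0 :=
    (Submodule.Quotient.mk_eq_zero _).mpr (LinearMap.mem_range_self _ _)
  rw [borchD_single, map_add, map_smul, add_eq_zero_iff_eq_neg] at h
  rw [h, neg_smul]

theorem mkQ_single_T_pow_apply (j : ℕ) (c : ℤ) (w : V) :
    π (Finsupp.single c ((T ^ j) w))
      = ((-1) ^ j * ∏ k ∈ range j, ((c : ℂ) - k)) • π (Finsupp.single (c - j) w) := by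
  induction j generalizing c w with
  | zero => simp
  | succ j ih =>
    rw [pow_succ, Module.End.mul_apply, ih, mkQ_single_T_apply, smul_smul, prod_range_succ,
      sub_sub, Nat.cast_succ]
    congr 1
    push_cast
    ring

theorem mkQ_single_neg_sum_T_pow (c : ℤ) (n N : ℕ) (y : ℕ → V) :
    π (Finsupp.single c
        (-∑ j ∈ range N, ((-1 : ℂ) ^ (n + j) * ((j.factorial : ℂ)⁻¹)) • (T ^ j) (y (n + j))))
      = -∑ j ∈ range N, ((-1) ^ n * genChoose c j) • π (Finsupp.single (c - j) (y (n + j))) := by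
  simp only [Finsupp.single_neg, Finsupp.single_finsetSum, ← Finsupp.smul_single, map_neg,
    map_sum, map_smul, mkQ_single_T_pow_apply, smul_smul]
  congr 1
  refine sum_congr rfl fun j _ => ?_
  have hsq : ((-1 : ℂ) ^ j) ^ 2 = 1 := by rw [← pow_mul, pow_mul', neg_one_sq, one_pow]
  rw [genChoose, pow_add]
  congr 1
  linear_combination ((-1) ^ n * (j.factorial : ℂ)⁻¹ * ∏ k ∈ range j, ((c : ℂ) - k)) * hsq

end BorcherdsQuotient

theorem stmt13_general (V : Type*) [AddCommGroup V] [Module ℂ V]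
    (T : V →ₗ[ℂ] V)                -- the translation operator ∂
    (mul : ℕ → V → V → V)          -- the n-th products u_{(n)}v
    (u v : V) (a b : ℤ) (N : ℕ)
    -- `u_{(r)}v = 0` for `r` large
    (hvan : ∀ r, N ≤ r → mul r u v = 0 ∧ mul r v u = 0)
    -- skew-symmetry `u_{(n)}v = −Σ_{j≥0} (−1)^{n+j} ∂^{(j)}(v_{(n+j)}u)`
    (hskew1 : ∀ n : ℕ, mul n u v =
      -∑ j ∈ Finset.range N, ((-1 : ℂ) ^ (n + j) * ((j.factorial : ℂ)⁻¹)) •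
        ((T ^ j) (mul (n + j) v u))) :
    (∑ r ∈ Finset.range N, genChoose a r • Finsupp.single (a + b - (r : ℤ)) (mul r u v))
    + (∑ r ∈ Finset.range N, genChoose b r • Finsupp.single (a + b - (r : ℤ)) (mul r v u))
    ∈ LinearMap.range (borchD V T) := by
  let X : ℕ → (ℤ →₀ V) ⧸ LinearMap.range (borchD V T) := fun m =>
    (LinearMap.range (borchD V T)).mkQ (Finsupp.single (a + b - m) (mul m v u))
  have hX : ∀ m, N ≤ m → X m = 0 := fun m hm => by simp [X, (hvan m hm).2]
  have hskew : ∀ r : ℕ,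
      (LinearMap.range (borchD V T)).mkQ (Finsupp.single (a + b - r) (mul r u v)) =
        -∑ j ∈ range N, ((-1) ^ r * genChoose (a + b - r) j) • X (r + j) := by
    intro r
    rw [hskew1 r, mkQ_single_neg_sum_T_pow T _ r N fun k => mul k v u]
    simp only [X, Nat.cast_add, sub_add_eq_sub_sub]
  rw [← Submodule.Quotient.mk_eq_zero, ← Submodule.mkQ_apply, map_add, map_sum, map_sum]
  simp only [map_smul, hskew, smul_neg, sum_neg_distrib]
  rw [sum_genChoose_smul_sum_genChoose_smul a b N X hX]
  exact neg_add_cancel _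

/-- In the Borcherds Lie algebra `L(V) = (V ⊗ ℂ[t,t⁻¹]) / Im(∂⊗id + id⊗d/dt)`,
the bracket `[u t^a, v t^b] = Σ_{r≥0} C(a,r) (u_{(r)}v) t^{a+b−r}` is antisymmetric
modulo the image of `∂⊗id + id⊗d/dt`:
`[u t^a, v t^b] + [v t^b, u t^a] ∈ Im(∂⊗id + id⊗d/dt)`. -/
theorem stmt13 (V : Type*) [AddCommGroup V] [Module ℂ V]
    (T : V →ₗ[ℂ] V)                -- the translation operator ∂
    (mul : ℕ → V → V → V)          -- the n-th products u_{(n)}v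
    (u v : V) (a b : ℤ) (N : ℕ)
    -- `u_{(r)}v = 0` for `r` large
    (hvan : ∀ r, N ≤ r → mul r u v = 0 ∧ mul r v u = 0)
    -- skew-symmetry `u_{(n)}v = −Σ_{j≥0} (−1)^{n+j} ∂^{(j)}(v_{(n+j)}u)`
    (hskew1 : ∀ n : ℕ, mul n u v =
      -∑ j ∈ Finset.range N, ((-1 : ℂ) ^ (n + j) * ((j.factorial : ℂ)⁻¹)) •
        ((T ^ j) (mul (n + j) v u)))
    (hskew2 : ∀ n : ℕ, mul n v u =
      -∑ j ∈ Finset.range N, ((-1 : ℂ) ^ (n + j) * ((j.factorial : ℂ)⁻¹)) •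
        ((T ^ j) (mul (n + j) u v))) :
    (∑ r ∈ Finset.range N, genChoose a r • Finsupp.single (a + b - (r : ℤ)) (mul r u v))
    + (∑ r ∈ Finset.range N, genChoose b r • Finsupp.single (a + b - (r : ℤ)) (mul r v u))
    ∈ LinearMap.range (borchD V T) :=
  stmt13_general V T mul u v a b N hvan hskew1
end
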